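/- Let X be a scheme (or just a set with a Frobenius action) over a finite field k with q elements, and let |X(k_d)| denote the number of points fixed by the d-th power of Frobenius. For a partition λ = [1^{λ_1}, ..., ν^{λ_ν}], the number of λ-tuples of points of X (i.e., tuples of distinct points consisting of λ_1 Frobenius-conjugate 1-tuples, followed by λ_2 conjugate 2-tuples, etc.) equals the product over i = 1,...,ν and j = 0,...,λ_i − 1 of ((∑_{d | i} μ(i/d) · |X(k_d)|) − i·j), where μ is the Möbius function. -/

import Mathlib

/-!
A conjugate `c`-tuple is determined by its first point, which may be any point of exact period `c`,
and two conjugate tuples share a point iff their first points lie on the same orbit. A `λ`-tuple is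
therefore a choice, for each `i`, of `λ_i` points of exact period `i` on pairwise distinct orbits
(points of different exact periods never share an orbit). Choosing them one at a time, the `j`-th
point must avoid the `i * j` points on the orbits already used, which leaves `M_i - i * j` choices,
where `M_i` is the number of points of exact period `i`. Finally `|X(k_d)| = ∑_{e ∣ d} M_e`, so
Möbius inversion gives `M_i = ∑_{d ∣ i} μ(i/d) |X(k_d)|`.
-/

open Finset Function

section TupleCount

variable {Y Q : Type*} [Finite Y] (f : Y → Q) {c : ℕ}

theorem card_compl_preimage_range_add {n : ℕ} (hf : ∀ y, Nat.card {y' // f y' = f y} = c)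
    {y : Fin n → Y} (hy : Injective (f ∘ y)) :
    Nat.card {x // f x ∉ Set.range (f ∘ y)} + n * c = Nat.card Y := by
  classical
  have hfib : Nat.card {x // f x ∈ Set.range (f ∘ y)} = n * c := by
    have e : (Σ j : Fin n, {x // f x = f (y j)}) ≃ {x // f x ∈ Set.range (f ∘ y)} :=
      Equiv.ofBijective (fun p => ⟨p.2.1, p.1, p.2.2.symm⟩) ⟨by
        rintro ⟨j, x, hx⟩ ⟨j', x', hx'⟩ h
        obtain rfl : x = x' := congrArg Subtype.val h
        obtain rfl : j = j' := hy (hx.symm.trans hx')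
        rfl, fun ⟨x, j, hj⟩ => ⟨⟨j, x, hj.symm⟩, rfl⟩⟩
    rw [← Nat.card_congr e, Nat.card_sigma]
    simp [hf]
  rw [← hfib, add_comm, ← Nat.card_sum, Nat.card_congr (Equiv.sumCompl _)]

theorem card_fin_tuples_injective_comp (hf : ∀ y, Nat.card {y' // f y' = f y} = c) (n : ℕ) :
    (Nat.card {y : Fin n → Y // Injective (f ∘ y)} : ℤ) =
      ∏ j ∈ range n, ((Nat.card Y : ℤ) - c * j) := by
  classical
  have := Fintype.ofFinite Y
  induction n with
  | zero =>
    rw [Nat.card_congr (Equiv.subtypeUnivEquiv fun y => injective_of_subsingleton (f ∘ y))]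
    simp
  | succ n ih =>
    have hcons (y : Fin (n + 1) → Y) : Injective (f ∘ y) ↔
        f (y 0) ∉ Set.range (f ∘ Fin.tail y) ∧ Injective (f ∘ Fin.tail y) := by
      conv_lhs => rw [← Fin.cons_self_tail y, Fin.comp_cons, Fin.cons_injective_iff]
    have e : {y : Fin (n + 1) → Y // Injective (f ∘ y)} ≃
        Σ y : {y : Fin n → Y // Injective (f ∘ y)}, {x // f x ∉ Set.range (f ∘ y.1)} :=
      { toFun := fun y =>
          ⟨⟨Fin.tail y.1, ((hcons y.1).1 y.2).2⟩, ⟨y.1 0, ((hcons y.1).1 y.2).1⟩⟩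
        invFun := fun p => ⟨Fin.cons p.2.1 p.1.1, by
          rw [Fin.comp_cons, Fin.cons_injective_iff]; exact ⟨p.2.2, p.1.2⟩⟩
        left_inv := fun y => Subtype.ext (Fin.cons_self_tail y.1)
        right_inv := fun p => Sigma.subtype_ext (Subtype.ext rfl) rfl }
    have hfib (y : {y : Fin n → Y // Injective (f ∘ y)}) :
        (Nat.card {x // f x ∉ Set.range (f ∘ y.1)} : ℤ) = Nat.card Y - c * n := by
      rw [← card_compl_preimage_range_add f hf y.2]
      push_cast
      ring
    rw [Nat.card_congr e, Nat.card_sigma, prod_range_succ, ← ih]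
    push_cast
    rw [sum_congr rfl fun y _ => hfib y, sum_const, card_univ, Fintype.card_eq_nat_card,
      nsmul_eq_mul]

end TupleCount

namespace Function

variable {α : Type*} {f : α → α}

theorem card_isPeriodicPt_eq_sum_card_minimalPeriod [Finite α] {d : ℕ} (hd : d ≠ 0) :
    Nat.card {x // IsPeriodicPt f d x} =
      ∑ e ∈ d.divisors, Nat.card {x // minimalPeriod f x = e} := by
  classical
  have := Fintype.ofFinite α
  simp only [Nat.card_eq_fintype_card, Fintype.card_subtype]
  rw [card_eq_sum_card_fiberwise fun x hx => Nat.mem_divisors.2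
    ⟨(mem_filter.1 hx).2.minimalPeriod_dvd, hd⟩]
  refine sum_congr rfl fun e he => congrArg card ?_
  rw [filter_filter]
  refine filter_congr fun x _ => ⟨And.right, fun hx => ⟨?_, hx⟩⟩
  exact (hx ▸ isPeriodicPt_minimalPeriod f x).trans_dvd (Nat.dvd_of_mem_divisors he)

theorem card_minimalPeriod_eq_sum_moebius [Finite α] {n : ℕ} (hn : 0 < n) :
    (Nat.card {x // minimalPeriod f x = n} : ℤ) =
      ∑ d ∈ n.divisors, (ArithmeticFunction.moebius (n / d) : ℤ) *
        Nat.card {x // f^[d] x = x} := by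
  have hinv := (ArithmeticFunction.sum_eq_iff_sum_mul_moebius_eq (R := ℤ)
    (f := fun e => Nat.card {x // minimalPeriod f x = e})
    (g := fun d => Nat.card {x // f^[d] x = x})).1 (fun d hd => by
      exact_mod_cast (card_isPeriodicPt_eq_sum_card_minimalPeriod (f := f) hd.ne').symm) n hn
  simp only [Int.cast_id] at hinv
  rw [← hinv, Nat.sum_divisorsAntidiagonal' (fun a b => (ArithmeticFunction.moebius a : ℤ) *
    Nat.card {x // f^[b] x = x})]

theorem periodicOrbit_eq_iff {x y : α} (hx : x ∈ periodicPts f) (hy : y ∈ periodicPts f) :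
    periodicOrbit f y = periodicOrbit f x ↔ ∃ n < minimalPeriod f x, f^[n] x = y := by
  refine ⟨fun h => ?_, fun ⟨n, _, hn⟩ => hn ▸ periodicOrbit_apply_iterate_eq hx n⟩
  obtain ⟨n, rfl⟩ := (mem_periodicOrbit_iff hx).1 (h ▸ self_mem_periodicOrbit hy)
  exact ⟨n % minimalPeriod f x, Nat.mod_lt _ (minimalPeriod_pos_of_mem_periodicPts hx),
    iterate_mod_minimalPeriod_eq⟩

theorem card_periodicOrbit_fiber {c : ℕ} (hc : c ≠ 0) (x : {x // minimalPeriod f x = c}) :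
    Nat.card {y : {x // minimalPeriod f x = c} // periodicOrbit f y = periodicOrbit f x} = c := by
  have mem (y : {x // minimalPeriod f x = c}) : y.1 ∈ periodicPts f :=
    minimalPeriod_pos_iff_mem_periodicPts.1 (by rw [y.2]; exact Nat.pos_of_ne_zero hc)
  have e : Fin c ≃ {y : {x // minimalPeriod f x = c} // periodicOrbit f y = periodicOrbit f x} :=
    Equiv.ofBijective
      (fun m => ⟨⟨f^[m] x, (minimalPeriod_apply_iterate (mem x) m).trans x.2⟩,
        periodicOrbit_apply_iterate_eq (mem x) m⟩)
      ⟨fun m m' h => Fin.ext <| iterate_injOn_Iio_minimalPeriod (x.2.symm ▸ m.2)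
          (x.2.symm ▸ m'.2) (congrArg (fun y => y.1.1) h),
        fun ⟨y, hy⟩ => by
          obtain ⟨n, hn, hxy⟩ := (periodicOrbit_eq_iff (mem x) (mem y)).1 hy
          exact ⟨⟨n, x.2 ▸ hn⟩, Subtype.ext (Subtype.ext hxy)⟩⟩
  rw [← Nat.card_congr e, Nat.card_fin]

section Cyclic

-- The cast `ℕ → Fin (c + 1)` reduces modulo `c + 1`, matching the cyclic indexing of tuples.
open Fin.NatCast

variable {c : ℕ} {p : Fin (c + 1) → α}

theorem iterate_eq_of_cyclic (hp : ∀ m, f (p m) = p (m + 1)) (k : ℕ) :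
    f^[k] (p 0) = p (k : Fin (c + 1)) := by
  induction k with
  | zero => rfl
  | succ k ih => rw [iterate_succ_apply', ih, hp, Nat.cast_succ]

theorem minimalPeriod_eq_of_cyclic (hp : ∀ m, f (p m) = p (m + 1)) (hinj : Injective p) :
    minimalPeriod f (p 0) = c + 1 := by
  have hper : IsPeriodicPt f (c + 1) (p 0) := by
    rw [IsPeriodicPt, IsFixedPt, iterate_eq_of_cyclic hp, Fin.natCast_self]
  refine Nat.dvd_antisymm hper.minimalPeriod_dvd (Fin.natCast_eq_zero.1 (hinj ?_))
  rw [← iterate_eq_of_cyclic hp]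
  exact isPeriodicPt_minimalPeriod f _

theorem IsPeriodicPt.apply_iterate_eq_iterate_add_one {x : α} (hx : IsPeriodicPt f (c + 1) x)
    (m : Fin (c + 1)) : f (f^[m] x) = f^[(m + 1 : Fin (c + 1))] x := by
  rw [Fin.val_add, Fin.val_one', Nat.add_mod_mod, hx.iterate_mod_apply, iterate_succ_apply']

end Cyclic

end Function

section DistinctOrbitPoints

variable {α : Type*} (f : α → α)

abbrev DistinctOrbitPoints (c n : ℕ) : Type _ :=
  {y : Fin n → {x // minimalPeriod f x = c} // Injective (periodicOrbit f ∘ Subtype.val ∘ y)}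

theorem card_distinctOrbitPoints [Finite α] {c : ℕ} (hc : c ≠ 0) (n : ℕ) :
    (Nat.card (DistinctOrbitPoints f c n) : ℤ) =
      ∏ j ∈ range n, ((Nat.card {x // minimalPeriod f x = c} : ℤ) - c * j) :=
  card_fin_tuples_injective_comp _ (card_periodicOrbit_fiber hc) n

end DistinctOrbitPoints

section LambdaTuple

open Fin.NatCast

variable {α : Type*} (f : α → α) (ν : ℕ) (L : ℕ → ℕ)

abbrev LambdaTuple : Type _ :=
  {t : (i : Fin ν) → Fin (L ((i : ℕ) + 1)) → (Fin ((i : ℕ) + 1) → α) //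
    (∀ (i : Fin ν) (j : Fin (L ((i : ℕ) + 1))) (m : Fin ((i : ℕ) + 1)),
      f (t i j m) = t i j (m + 1)) ∧
    Injective (fun p : Σ i : Fin ν, Fin (L ((i : ℕ) + 1)) × Fin ((i : ℕ) + 1) =>
      t p.1 p.2.1 p.2.2)}

variable {f ν L}

namespace LambdaTuple

variable (t : LambdaTuple f ν L) (i : Fin ν)

theorem eq_of_apply_eq {j j' : Fin (L (i + 1))} {m m' : Fin (i + 1)}
    (h : t.1 i j m = t.1 i j' m') : j = j' ∧ m = m' :=
  Prod.mk.inj <| eq_of_heq <|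
    (Sigma.mk.inj_iff.1 (t.2.2 (a₁ := ⟨i, j, m⟩) (a₂ := ⟨i, j', m'⟩) h)).2

theorem minimalPeriod_apply_zero (j : Fin (L (i + 1))) : minimalPeriod f (t.1 i j 0) = i + 1 :=
  minimalPeriod_eq_of_cyclic (t.2.1 i j) fun _ _ h => (t.eq_of_apply_eq i h).2

theorem injective_periodicOrbit : Injective fun j => periodicOrbit f (t.1 i j 0) := by
  intro j j' h
  have hmem (j) : t.1 i j 0 ∈ periodicPts f :=
    minimalPeriod_pos_iff_mem_periodicPts.1 (by rw [t.minimalPeriod_apply_zero]; omega)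
  obtain ⟨n, -, hn⟩ := (periodicOrbit_eq_iff (hmem j') (hmem j)).1 h
  rw [iterate_eq_of_cyclic (t.2.1 i j')] at hn
  exact (t.eq_of_apply_eq i hn).1.symm

end LambdaTuple

theorem injective_sigma_iterate (y : ∀ i : Fin ν, DistinctOrbitPoints f (i + 1) (L (i + 1))) :
    Injective fun p : Σ i : Fin ν, Fin (L ((i : ℕ) + 1)) × Fin ((i : ℕ) + 1) =>
      f^[p.2.2] ((y p.1).1 p.2.1).1 := by
  have hmem (i j) : ((y i).1 j).1 ∈ periodicPts f :=
    minimalPeriod_pos_iff_mem_periodicPts.1 (by rw [((y i).1 j).2]; omega)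
  rintro ⟨i, j, m⟩ ⟨i', j', m'⟩ h
  dsimp only at h
  have hperiod : (i : ℕ) + 1 = i' + 1 := by
    rw [← ((y i).1 j).2, ← ((y i').1 j').2, ← minimalPeriod_apply_iterate (hmem i j) m, h,
      minimalPeriod_apply_iterate (hmem i' j')]
  obtain rfl : i = i' := Fin.ext (by omega)
  obtain rfl : j = j' := (y i).2 <| by
    simp only [comp_apply]
    rw [← periodicOrbit_apply_iterate_eq (hmem i j) m, h, periodicOrbit_apply_iterate_eq]
    exact hmem i j'
  obtain rfl : m = m' := Fin.ext <| iterate_injOn_Iio_minimalPeriod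
    (((y i).1 j).2.symm ▸ m.2) (((y i).1 j).2.symm ▸ m'.2) h
  rfl

def lambdaTupleEquivDistinctOrbitPoints :
    LambdaTuple f ν L ≃ ∀ i : Fin ν, DistinctOrbitPoints f (i + 1) (L (i + 1)) where
  toFun t i :=
    ⟨fun j => ⟨t.1 i j 0, t.minimalPeriod_apply_zero i j⟩, t.injective_periodicOrbit i⟩
  invFun y := ⟨fun i j m => f^[m] ((y i).1 j).1,
    fun i j m => IsPeriodicPt.apply_iterate_eq_iterate_add_one (by
      have := isPeriodicPt_minimalPeriod f ((y i).1 j).1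
      rwa [((y i).1 j).2] at this) m,
    injective_sigma_iterate y⟩
  left_inv t := Subtype.ext <| funext fun i => funext fun j => funext fun m => by
    simp only [iterate_eq_of_cyclic (t.2.1 i j), Fin.cast_val_eq_self]
  right_inv y := rfl

end LambdaTuple

/-- Let `X` be a set with a "Frobenius" bijection `F` (e.g. the `k̄`-points of a scheme over a
finite field `k`, with `|X(k_d)|` the number of fixed points of `F^d`).  For a partition
`λ = [1^{L 1}, …, ν^{L ν}]`, the number of `λ`-tuples of points of `X` — i.e. families
consisting, for each `i`, of `L i` ordered conjugate `i`-tuples, all points distinct — equals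
`∏_{i=1}^{ν} ∏_{j=0}^{L i − 1} ((∑_{d ∣ i} μ(i/d)·|X(k_d)|) − i·j)`. -/
theorem stmt_0 {X : Type*} [Finite X] (F : X ≃ X) (ν : ℕ) (L : ℕ → ℕ)
    (N : ℕ → ℤ)
    (hN : ∀ i : ℕ, N i = ∑ d ∈ i.divisors,
      (ArithmeticFunction.moebius (i / d) : ℤ) *
        (Nat.card {x : X // (⇑F)^[d] x = x} : ℤ)) :
    (Nat.card {t : (i : Fin ν) → Fin (L ((i : ℕ) + 1)) → (Fin ((i : ℕ) + 1) → X) //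
        (∀ (i : Fin ν) (j : Fin (L ((i : ℕ) + 1))) (m : Fin ((i : ℕ) + 1)),
          F (t i j m) = t i j (m + 1)) ∧
        Function.Injective (fun p : Σ i : Fin ν, Fin (L ((i : ℕ) + 1)) × Fin ((i : ℕ) + 1) =>
          t p.1 p.2.1 p.2.2)} : ℤ)
      = ∏ i ∈ Finset.range ν, ∏ j ∈ Finset.range (L (i + 1)),
          (N (i + 1) - ((i : ℤ) + 1) * (j : ℤ)) := by
  rw [Nat.card_congr lambdaTupleEquivDistinctOrbitPoints, Nat.card_pi, Nat.cast_prod,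
    Fin.prod_univ_eq_prod_range
      (fun i => (Nat.card (DistinctOrbitPoints F (i + 1) (L (i + 1))) : ℤ))]
  refine prod_congr rfl fun i _ => ?_
  rw [card_distinctOrbitPoints _ i.add_one_ne_zero, hN,
    ← card_minimalPeriod_eq_sum_moebius i.add_one_pos]
  push_cast
  rfl
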